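/- arXiv:2205.01914 — 4 statements merged into one kernel-verified Lean document; each statement's English description precedes it below -/
import Mathlib

section
/- Let G : Ω₂ → ℝ (Ω₂ ⊆ ℝ² a rectangle) be 2-increasing (i.e., G(x₁,y₁) + G(x₂,y₂) ≥ G(x₁,y₂) + G(x₂,y₁) whenever x₁ ≤ x₂, y₁ ≤ y₂) and coordinatewise non-decreasing, and let f : ℝ → ℝ be non-decreasing and convex. Then f ∘ G is 2-increasing. -/
/-!
Write `a, b, c, d` for the values of `G` at the corners `(x₁,y₁), (x₁,y₂), (x₂,y₁), (x₂,y₂)`.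
Monotonicity of `G` gives `a ≤ b` and `a ≤ c`, and 2-increasingness gives `b + c ≤ a + d`.
Put `e = b + c - a`: then `b` and `c` lie in `[a, e]` and are symmetric about its midpoint,
so convexity gives `f b + f c ≤ f a + f e`, and `f e ≤ f d` since `f` is monotone.
-/

open Set

section

variable {𝕜 β : Type*} [Field 𝕜] [LinearOrder 𝕜] [IsStrictOrderedRing 𝕜]
  [AddCommGroup β] [PartialOrder β] [IsOrderedAddMonoid β] [Module 𝕜 β]

theorem ConvexOn.add_le_add_of_add_eq {s : Set 𝕜} {f : 𝕜 → β} (hf : ConvexOn 𝕜 s f)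
    {a b c e : 𝕜} (ha : a ∈ s) (he : e ∈ s) (hab : a ≤ b) (hac : a ≤ c) (hsum : b + c = a + e) :
    f b + f c ≤ f a + f e := by
  rcases (show a ≤ e by linarith).eq_or_lt with rfl | hae
  · obtain rfl : b = a := by linarith
    obtain rfl : c = b := by linarith
    rfl
  -- `b = (1 - t) a + t e` and `c = t a + (1 - t) e`
  set t := (b - a) / (e - a)
  have hea : e - a ≠ 0 := sub_ne_zero.2 hae.ne'
  have ht₀ : 0 ≤ t := div_nonneg (by linarith) (by linarith)
  have ht₁ : 0 ≤ 1 - t := sub_nonneg.2 <| (div_le_one (by linarith)).2 (by linarith)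
  have hfb : f b ≤ (1 - t) • f a + t • f e := by
    convert hf.2 ha he ht₁ ht₀ (by ring) using 2
    simp only [smul_eq_mul, t]; field_simp; ring
  have hfc : f c ≤ t • f a + (1 - t) • f e := by
    convert hf.2 ha he ht₀ ht₁ (by ring) using 2
    simp only [smul_eq_mul, t]; field_simp; linear_combination (e - a) * hsum
  calc f b + f c ≤ (1 - t) • f a + t • f e + (t • f a + (1 - t) • f e) := add_le_add hfb hfc
    _ = f a + f e := by module

theorem ConvexOn.add_le_add_of_add_le {f : 𝕜 → β} (hf : ConvexOn 𝕜 univ f) (hf_mono : Monotone f)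
    {a b c d : 𝕜} (hab : a ≤ b) (hac : a ≤ c) (hsum : b + c ≤ a + d) :
    f b + f c ≤ f a + f d :=
  calc f b + f c ≤ f a + f (b + c - a) :=
        hf.add_le_add_of_add_eq (mem_univ a) (mem_univ _) hab hac (by ring)
    _ ≤ f a + f d := by gcongr; exact hf_mono (by linarith)

end

theorem comp_convex_monotone_two_increasing
    (Ω : Set (ℝ × ℝ)) (G : ℝ → ℝ → ℝ) (f : ℝ → ℝ)
    (h2incr : ∀ x₁ x₂ y₁ y₂ : ℝ, x₁ ≤ x₂ → y₁ ≤ y₂ →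
      Set.Icc x₁ x₂ ×ˢ Set.Icc y₁ y₂ ⊆ Ω →
      G x₁ y₂ + G x₂ y₁ ≤ G x₁ y₁ + G x₂ y₂)
    (hmono₁ : ∀ x₁ x₂ y : ℝ, x₁ ≤ x₂ → (x₁, y) ∈ Ω → (x₂, y) ∈ Ω → G x₁ y ≤ G x₂ y)
    (hmono₂ : ∀ x y₁ y₂ : ℝ, y₁ ≤ y₂ → (x, y₁) ∈ Ω → (x, y₂) ∈ Ω → G x y₁ ≤ G x y₂)
    (hf_mono : Monotone f) (hf_conv : ConvexOn ℝ Set.univ f) :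
    ∀ x₁ x₂ y₁ y₂ : ℝ, x₁ ≤ x₂ → y₁ ≤ y₂ →
      Set.Icc x₁ x₂ ×ˢ Set.Icc y₁ y₂ ⊆ Ω →
      f (G x₁ y₂) + f (G x₂ y₁) ≤ f (G x₁ y₁) + f (G x₂ y₂) := by
  intro x₁ x₂ y₁ y₂ hx hy hsub
  have h₁₁ : (x₁, y₁) ∈ Ω := hsub ⟨left_mem_Icc.2 hx, left_mem_Icc.2 hy⟩
  have h₁₂ : (x₁, y₂) ∈ Ω := hsub ⟨left_mem_Icc.2 hx, right_mem_Icc.2 hy⟩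
  have h₂₁ : (x₂, y₁) ∈ Ω := hsub ⟨right_mem_Icc.2 hx, left_mem_Icc.2 hy⟩
  exact hf_conv.add_le_add_of_add_le hf_mono (hmono₂ x₁ y₁ y₂ hy h₁₁ h₁₂)
    (hmono₁ x₁ x₂ y₁ hx h₁₁ h₂₁) (h2incr x₁ x₂ y₁ y₂ hx hy hsub)
end

section
/- Let φ : Ω₂ → ℝ (Ω₂ ⊆ ℝ² a rectangle) be 2-increasing, non-increasing in the first coordinate and non-decreasing in the second coordinate, and let f : ℝ → ℝ be concave and non-decreasing. Then f ∘ φ is 2-increasing. -/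
/-!
Write `a = φ x₂ y₁`, `b = φ x₁ y₁`, `c = φ x₂ y₂`, `u = φ x₁ y₂`. The monotonicity assumptions
give `a ≤ b` and `a ≤ c`, and 2-increasingness gives `u ≤ b + c - a`. Since `b` and `c` lie
in `[a, b + c - a]` symmetrically, concavity gives `f a + f (b + c - a) ≤ f b + f c`, and
monotonicity of `f` replaces `b + c - a` by `u`.
-/

section

variable {𝕜 β : Type*} [Field 𝕜] [LinearOrder 𝕜] [IsStrictOrderedRing 𝕜]
  [AddCommGroup β] [PartialOrder β] [IsOrderedAddMonoid β] [Module 𝕜 β]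

theorem ConcaveOn.map_add_map_le_of_add_eq {s : Set 𝕜} {f : 𝕜 → β} (hf : ConcaveOn 𝕜 s f)
    {a b c d : 𝕜} (ha : a ∈ s) (hd : d ∈ s) (hab : a ≤ b) (hac : a ≤ c)
    (hsum : b + c = a + d) :
    f a + f d ≤ f b + f c := by
  rcases hab.eq_or_lt with rfl | hab
  · rw [show c = d by linear_combination hsum, add_comm]
  have had : 0 < d - a := by linarith
  -- `b` and `c` divide `[a, d]` in the mirrored ratios `μ : ν` and `ν : μ`.
  obtain ⟨μ, hμ⟩ : ∃ μ, μ = (b - a) / (d - a) := ⟨_, rfl⟩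
  obtain ⟨ν, hν⟩ : ∃ ν, ν = (c - a) / (d - a) := ⟨_, rfl⟩
  have hμ₀ : 0 ≤ μ := hμ ▸ div_nonneg (sub_nonneg.2 hab.le) had.le
  have hν₀ : 0 ≤ ν := hν ▸ div_nonneg (sub_nonneg.2 hac) had.le
  have hμν : ν + μ = 1 := by rw [hμ, hν]; field_simp; linear_combination hsum
  have hb : ν • a + μ • d = b := by
    rw [hμ, hν, smul_eq_mul, smul_eq_mul]; field_simp; linear_combination a * hsum
  have hc : μ • a + ν • d = c := by
    rw [hμ, hν, smul_eq_mul, smul_eq_mul]; field_simp; linear_combination a * hsum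
  have hfb : ν • f a + μ • f d ≤ f b := hb ▸ hf.2 ha hd hν₀ hμ₀ hμν
  have hfc : μ • f a + ν • f d ≤ f c := hc ▸ hf.2 ha hd hμ₀ hν₀ ((add_comm _ _).trans hμν)
  calc f a + f d = (ν • f a + μ • f d) + (μ • f a + ν • f d) := by
        rw [add_add_add_comm, ← add_smul, ← add_smul, add_comm μ, hμν, one_smul, one_smul]
    _ ≤ f b + f c := add_le_add hfb hfc

theorem ConcaveOn.map_add_map_le_of_add_le {f : 𝕜 → β} (hf : ConcaveOn 𝕜 Set.univ f)
    (hf_mono : Monotone f) {a b c u : 𝕜} (hab : a ≤ b) (hac : a ≤ c) (hu : u + a ≤ b + c) :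
    f u + f a ≤ f b + f c :=
  calc f u + f a ≤ f (b + c - a) + f a := add_le_add_left (hf_mono (by linarith)) _
    _ = f a + f (b + c - a) := add_comm _ _
    _ ≤ f b + f c := hf.map_add_map_le_of_add_eq trivial trivial hab hac (by ring)

end

theorem comp_concave_monotone_two_increasing
    (Ω : Set (ℝ × ℝ)) (φ : ℝ → ℝ → ℝ) (f : ℝ → ℝ)
    (h2incr : ∀ x₁ x₂ y₁ y₂ : ℝ, x₁ ≤ x₂ → y₁ ≤ y₂ →
      Set.Icc x₁ x₂ ×ˢ Set.Icc y₁ y₂ ⊆ Ω →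
      φ x₁ y₂ + φ x₂ y₁ ≤ φ x₁ y₁ + φ x₂ y₂)
    (hanti₁ : ∀ x₁ x₂ y : ℝ, x₁ ≤ x₂ → (x₁, y) ∈ Ω → (x₂, y) ∈ Ω → φ x₂ y ≤ φ x₁ y)
    (hmono₂ : ∀ x y₁ y₂ : ℝ, y₁ ≤ y₂ → (x, y₁) ∈ Ω → (x, y₂) ∈ Ω → φ x y₁ ≤ φ x y₂)
    (hf_mono : Monotone f) (hf_conc : ConcaveOn ℝ Set.univ f) :
    ∀ x₁ x₂ y₁ y₂ : ℝ, x₁ ≤ x₂ → y₁ ≤ y₂ →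
      Set.Icc x₁ x₂ ×ˢ Set.Icc y₁ y₂ ⊆ Ω →
      f (φ x₁ y₂) + f (φ x₂ y₁) ≤ f (φ x₁ y₁) + f (φ x₂ y₂) := by
  intro x₁ x₂ y₁ y₂ hx hy hΩ
  have h₁₁ : (x₁, y₁) ∈ Ω := hΩ ⟨Set.left_mem_Icc.2 hx, Set.left_mem_Icc.2 hy⟩
  have h₂₁ : (x₂, y₁) ∈ Ω := hΩ ⟨Set.right_mem_Icc.2 hx, Set.left_mem_Icc.2 hy⟩
  have h₂₂ : (x₂, y₂) ∈ Ω := hΩ ⟨Set.right_mem_Icc.2 hx, Set.right_mem_Icc.2 hy⟩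
  exact hf_conc.map_add_map_le_of_add_le hf_mono (hanti₁ x₁ x₂ y₁ hx h₁₁ h₂₁)
    (hmono₂ x₂ y₁ y₂ hy h₂₁ h₂₂) (h2incr x₁ x₂ y₁ y₂ hx hy hΩ)
end

section
/- Let 0 < t₁ < t₂ < s < 1 satisfy ((1-s)/s)·(t₂/(1-t₂)) > ((1-t₂)/t₂)·(t₁/(1-t₁)). Let u₁ ∈ (0,1) and let u₂ satisfy u₁^{((1-s)/s)(t₂/(1-t₂))} < u₂ < u₁^{((1-t₂)/t₂)(t₁/(1-t₁))}. Set v₁ = u₂^{(1-t₁)/t₁} and v₂ = u₁^{(1-s)/s}. Then u₁ < u₂, v₁ < v₂, h(u₂,v₁) = t₁, h(u₁,v₂) = s, and t₁ < min{h(u₁,v₁), h(u₂,v₂)} ≤ max{h(u₁,v₁), h(u₂,v₂)} ≤ t₂ < s. -/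
/-!
For `u, v ∈ (0, 1)` we have `hFun u v = 1 / (1 + log v / log u)`, so `hFun u v ∈ (t, t']` iff
`log v / log u ∈ [q t', q t)`, where `q t = (1 - t) / t` is decreasing; in particular
`hFun u (u ^ q t) = t`. With `r = log u₂ / log u₁`, the bounds on `u₂` read
`q t₂ / q t₁ < r < q s / q t₂`, and the log-ratios of the two remaining pairs are
`q t₁ * r` and `q s / r`, both of which this window puts in `[q t₂, q t₁)`.
-/

noncomputable def hFun (u v : ℝ) : ℝ := Real.log u / Real.log (u * v)

open Real Set

lemma rpow_mem_Ioo_zero_one {u q : ℝ} (hu : u ∈ Ioo 0 1) (hq : 0 < q) : u ^ q ∈ Ioo 0 1 :=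
  ⟨rpow_pos_of_pos hu.1 q, rpow_lt_one hu.1.le hu.2 hq⟩

lemma rpow_lt_iff_log_div_lt {u w e : ℝ} (hu : u ∈ Ioo 0 1) (hw : 0 < w) :
    u ^ e < w ↔ log w / log u < e := by
  rw [rpow_lt_iff_lt_log hu.1 hw, div_lt_iff_of_neg (log_neg hu.1 hu.2)]

lemma lt_rpow_iff_lt_log_div {u w e : ℝ} (hu : u ∈ Ioo 0 1) (hw : 0 < w) :
    w < u ^ e ↔ e < log w / log u := by
  rw [lt_rpow_iff_log_lt hw hu.1, lt_div_iff_of_neg (log_neg hu.1 hu.2)]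

lemma hFun_rpow_self {u t : ℝ} (hu₀ : 0 < u) (hu₁ : u ≠ 1) (ht : t ≠ 0) :
    hFun u (u ^ ((1 - t) / t)) = t := by
  have hlog : log u ≠ 0 := log_ne_zero_of_pos_of_ne_one hu₀ hu₁
  rw [hFun, log_mul hu₀.ne' (rpow_pos_of_pos hu₀ _).ne', log_rpow hu₀]
  field_simp
  ring

lemma lt_hFun_iff {u v t : ℝ} (hu : u ∈ Ioo 0 1) (hv : v ∈ Ioo 0 1) (ht : 0 < t) :
    t < hFun u v ↔ log v / log u < (1 - t) / t := by
  have hx := log_neg hu.1 hu.2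
  have hy := log_neg hv.1 hv.2
  rw [hFun, log_mul hu.1.ne' hv.1.ne', lt_div_iff_of_neg (by linarith),
    div_lt_iff_of_neg hx, div_mul_eq_mul_div, div_lt_iff₀ ht]
  constructor <;> intro h <;> linarith

lemma hFun_rpow_mem_Ioc_iff {u u' q t t' : ℝ} (hu : u ∈ Ioo 0 1) (hu' : u' ∈ Ioo 0 1)
    (hq : 0 < q) (ht : 0 < t) (ht' : 0 < t') :
    hFun u (u' ^ q) ∈ Ioc t t' ↔
      q * (log u' / log u) ∈ Ico ((1 - t') / t') ((1 - t) / t) := by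
  have hv := rpow_mem_Ioo_zero_one hu' hq
  rw [mem_Ioc, mem_Ico, lt_hFun_iff hu hv ht, ← not_lt, lt_hFun_iff hu hv ht', not_lt, and_comm,
    log_rpow hu'.1, mul_div_assoc]

lemma one_sub_div_lt_one_sub_div {t t' : ℝ} (ht : 0 < t) (htt' : t < t') :
    (1 - t') / t' < (1 - t) / t := by
  rw [div_lt_div_iff₀ (ht.trans htt') ht]
  nlinarith

lemma mul_mem_Ico_and_mul_inv_mem_Ico {a b c r : ℝ} (ha : 0 < a) (hc : 0 < c) (hcb : c < b)
    (hr : r ∈ Ioo (b / a) (c / b)) : a * r ∈ Ico b a ∧ c * r⁻¹ ∈ Ico b a := by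
  have hb : 0 < b := hc.trans hcb
  have hr₀ : 0 < r := (div_pos hb ha).trans hr.1
  have hr₁ : r < 1 := hr.2.trans ((div_lt_one hb).2 hcb)
  have hbr : b < a * r := (div_lt_iff₀' ha).1 hr.1
  refine ⟨⟨hbr.le, mul_lt_of_lt_one_right ha hr₁⟩, ⟨?_, ?_⟩⟩
  · rw [← div_eq_mul_inv, le_div_iff₀ hr₀]
    exact ((lt_div_iff₀' hb).1 hr.2).le
  · rw [← div_eq_mul_inv, div_lt_iff₀ hr₀]
    linarith

theorem linear_not_TP2_inequality_general (t₁ t₂ s u₁ u₂ v₁ v₂ : ℝ)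
    (ht1 : 0 < t₁) (ht12 : t₁ < t₂) (ht2s : t₂ < s) (hs : s < 1)
    (hu1 : u₁ ∈ Set.Ioo (0:ℝ) 1)
    (hu2l : u₁ ^ ((1 - s) / s * (t₂ / (1 - t₂))) < u₂)
    (hu2r : u₂ < u₁ ^ ((1 - t₂) / t₂ * (t₁ / (1 - t₁))))
    (hv₁ : v₁ = u₂ ^ ((1 - t₁) / t₁))
    (hv₂ : v₂ = u₁ ^ ((1 - s) / s)) :
    u₁ < u₂ ∧ v₁ < v₂ ∧ hFun u₂ v₁ = t₁ ∧ hFun u₁ v₂ = s ∧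
    t₁ < min (hFun u₁ v₁) (hFun u₂ v₂) ∧
    max (hFun u₁ v₁) (hFun u₂ v₂) ≤ t₂ ∧ t₂ < s := by
  subst hv₁ hv₂
  have ht2 : 0 < t₂ := ht1.trans ht12
  have hq₁ : 0 < (1 - t₁) / t₁ := div_pos (by linarith) ht1
  have hq₂ : 0 < (1 - t₂) / t₂ := div_pos (by linarith) ht2
  have hq_s : 0 < (1 - s) / s := div_pos (by linarith) (ht2.trans ht2s)
  have hu2 : u₂ ∈ Ioo 0 1 := ⟨(rpow_pos_of_pos hu1.1 _).trans hu2l,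
    hu2r.trans (rpow_mem_Ioo_zero_one hu1 (mul_pos hq₂ (div_pos ht1 (by linarith)))).2⟩
  have hr : log u₂ / log u₁ ∈
      Ioo ((1 - t₂) / t₂ / ((1 - t₁) / t₁)) ((1 - s) / s / ((1 - t₂) / t₂)) := by
    rw [div_div_eq_mul_div, mul_div_assoc, div_div_eq_mul_div, mul_div_assoc]
    exact ⟨(lt_rpow_iff_lt_log_div hu1 hu2.1).1 hu2r, (rpow_lt_iff_log_div_lt hu1 hu2.1).1 hu2l⟩
  obtain ⟨hratio₁, hratio₂⟩ :=
    mul_mem_Ico_and_mul_inv_mem_Ico hq₁ hq_s (one_sub_div_lt_one_sub_div ht2 ht2s) hr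
  have hr₀ : 0 < log u₂ / log u₁ :=
    div_pos_of_neg_of_neg (log_neg hu2.1 hu2.2) (log_neg hu1.1 hu1.2)
  have hu₁v₁ := (hFun_rpow_mem_Ioc_iff hu1 hu2 hq₁ ht1 ht2).2 hratio₁
  have hu₂v₂ :=
    (hFun_rpow_mem_Ioc_iff hu2 hu1 hq_s ht1 ht2).2 (inv_div (log u₂) (log u₁) ▸ hratio₂)
  refine ⟨?_, ?_, hFun_rpow_self hu2.1 hu2.2.ne ht1.ne',
    hFun_rpow_self hu1.1 hu1.2.ne (by linarith), lt_min hu₁v₁.1 hu₂v₂.1,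
    max_le hu₁v₁.2 hu₂v₂.2, ht2s⟩
  · rw [← log_lt_log_iff hu1.1 hu2.1, ← div_lt_one_of_neg (log_neg hu1.1 hu1.2)]
    exact (mul_lt_iff_lt_one_right hq₁).1 hratio₁.2
  · rw [lt_rpow_iff_lt_log_div hu1 (rpow_pos_of_pos hu2.1 _), log_rpow hu2.1, mul_div_assoc]
    exact (mul_inv_lt_iff₀ hr₀).1 hratio₂.2

theorem linear_not_TP2_inequality (t₁ t₂ s u₁ u₂ v₁ v₂ : ℝ)
    (ht1 : 0 < t₁) (ht12 : t₁ < t₂) (ht2s : t₂ < s) (hs : s < 1)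
    (hcond : (1 - t₂) / t₂ * (t₁ / (1 - t₁)) < (1 - s) / s * (t₂ / (1 - t₂)))
    (hu1 : u₁ ∈ Set.Ioo (0:ℝ) 1)
    (hu2l : u₁ ^ ((1 - s) / s * (t₂ / (1 - t₂))) < u₂)
    (hu2r : u₂ < u₁ ^ ((1 - t₂) / t₂ * (t₁ / (1 - t₁))))
    (hv₁ : v₁ = u₂ ^ ((1 - t₁) / t₁))
    (hv₂ : v₂ = u₁ ^ ((1 - s) / s)) :
    u₁ < u₂ ∧ v₁ < v₂ ∧ hFun u₂ v₁ = t₁ ∧ hFun u₁ v₂ = s ∧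
    t₁ < min (hFun u₁ v₁) (hFun u₂ v₂) ∧
    max (hFun u₁ v₁) (hFun u₂ v₂) ≤ t₂ ∧ t₂ < s :=
  linear_not_TP2_inequality_general t₁ t₂ s u₁ u₂ v₁ v₂ ht1 ht12 ht2s hs hu1 hu2l hu2r hv₁ hv₂
end

section
/- Let A : [0,1] → [0,1] be convex with max{1-t, t} ≤ A(t) ≤ 1 for all t (a Pickands dependence function). Define F_A(t) := A(t) + (1-t)·D⁺A(t) for t ∈ [0,1), where D⁺A is the right-hand derivative. Then F_A is non-decreasing and non-negative on [0,1). -/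
open Set

theorem FA_monotone_nonneg (A : ℝ → ℝ)
    (hA_conv : ConvexOn ℝ (Set.Icc 0 1) A)
    (hA_lb : ∀ t ∈ Set.Icc (0:ℝ) 1, max (1 - t) t ≤ A t)
    (hA_ub : ∀ t ∈ Set.Icc (0:ℝ) 1, A t ≤ 1) :
    MonotoneOn (fun t => A t + (1 - t) * derivWithin A (Set.Ici t) t) (Set.Ico 0 1) ∧
    ∀ t ∈ Set.Ico (0:ℝ) 1, 0 ≤ A t + (1 - t) * derivWithin A (Set.Ici t) t := by
  have hA0 : A 0 = 1 := by
    have h1 := hA_ub 0 (by norm_num)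
    have h2 := hA_lb 0 (by norm_num)
    simp only [sub_zero, max_eq_left (by norm_num : (0:ℝ) ≤ 1)] at h2
    linarith
  -- uniform lower bound on slopes
  have hslb : ∀ t ∈ Set.Icc (0:ℝ) 1, ∀ u ∈ Set.Icc (0:ℝ) 1, t < u → -1 ≤ slope A t u := by
    intro t ht u hu htu
    have h0u : (0:ℝ) < u := lt_of_le_of_lt ht.1 htu
    have h0u' : -1 ≤ slope A 0 u := by
      rw [slope_def_field, hA0, sub_zero]
      rw [le_div_iff₀ h0u]
      have := hA_lb u hu
      have := le_max_left (1 - u) u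
      linarith [le_trans (le_max_left (1 - u) u) (hA_lb u hu)]
    have hmono := hA_conv.slope_mono (x := u) hu
    have h0m : (0:ℝ) ∈ Set.Icc (0:ℝ) 1 \ {u} := ⟨by norm_num, by simp [h0u.ne]⟩
    have htm : t ∈ Set.Icc (0:ℝ) 1 \ {u} := ⟨ht, by simp [htu.ne]⟩
    have := hmono h0m htm ht.1
    calc (-1:ℝ) ≤ slope A 0 u := h0u'
    _ = slope A u 0 := slope_comm A 0 u
    _ ≤ slope A u t := this
    _ = slope A t u := slope_comm A u t
  set d : ℝ → ℝ := fun t => sInf (slope A t '' Set.Ioo t 1) with hd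
  have hbdd : ∀ t ∈ Set.Ico (0:ℝ) 1, BddBelow (slope A t '' Set.Ioo t 1) := by
    intro t ht
    refine ⟨-1, ?_⟩
    rintro _ ⟨u, hu, rfl⟩
    exact hslb t ⟨ht.1, ht.2.le⟩ u ⟨ht.1.trans hu.1.le, hu.2.le⟩ hu.1
  have hsubset : ∀ t ∈ Set.Ico (0:ℝ) 1, Set.Ioo t 1 ⊆ Set.Icc (0:ℝ) 1 \ {t} := by
    intro t ht u hu
    exact ⟨⟨(ht.1.trans hu.1.le), hu.2.le⟩, by simp [hu.1.ne']⟩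
  have hmonoslope : ∀ t ∈ Set.Ico (0:ℝ) 1, MonotoneOn (slope A t) (Set.Ioo t 1) :=
    fun t ht => (hA_conv.slope_mono ⟨ht.1, ht.2.le⟩).mono (hsubset t ht)
  have hne : ∀ t ∈ Set.Ico (0:ℝ) 1, (Set.Ioo t 1).Nonempty :=
    fun t ht => nonempty_Ioo.2 ht.2
  have key : ∀ t ∈ Set.Ico (0:ℝ) 1, HasDerivWithinAt A (d t) (Set.Ioi t) t := by
    intro t ht
    have := MonotoneOn.tendsto_nhdsWithin_Ioo_right (hne t ht) (hmonoslope t ht)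
      (hbdd t ht)
    rw [hasDerivWithinAt_iff_tendsto_slope' (notMem_Ioi_self)]
    exact this
  have dval : ∀ t ∈ Set.Ico (0:ℝ) 1, derivWithin A (Set.Ici t) t = d t := by
    intro t ht
    rw [← derivWithin_Ioi_eq_Ici]
    exact (key t ht).derivWithin (uniqueDiffWithinAt_Ioi t)
  -- d t ≤ slope A t u for u ∈ Icc, t < u
  have dle : ∀ t ∈ Set.Ico (0:ℝ) 1, ∀ u ∈ Set.Icc (0:ℝ) 1, t < u → d t ≤ slope A t u :=
    fun t ht u hu htu =>
      hA_conv.le_slope_of_hasDerivWithinAt_Ioi ⟨ht.1, ht.2.le⟩ hu htu (key t ht)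
  -- slope A s t ≤ d t for s < t
  have dge : ∀ s ∈ Set.Icc (0:ℝ) 1, ∀ t ∈ Set.Ico (0:ℝ) 1, s < t → slope A s t ≤ d t := by
    intro s hs t ht hst
    refine le_csInf ((hne t ht).image _) ?_
    rintro _ ⟨u, hu, rfl⟩
    have hmono := hA_conv.slope_mono (x := t) ⟨ht.1, ht.2.le⟩
    have hsm : s ∈ Set.Icc (0:ℝ) 1 \ {t} := ⟨hs, by simp [hst.ne]⟩
    have hum : u ∈ Set.Icc (0:ℝ) 1 \ {t} := hsubset t ht hu
    calc slope A s t = slope A t s := slope_comm A s t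
    _ ≤ slope A t u := hmono hsm hum (hst.le.trans hu.1.le)
  have dlb : ∀ t ∈ Set.Ico (0:ℝ) 1, -1 ≤ d t := by
    intro t ht
    refine le_csInf ((hne t ht).image _) ?_
    rintro _ ⟨u, hu, rfl⟩
    exact hslb t ⟨ht.1, ht.2.le⟩ u ⟨ht.1.trans hu.1.le, hu.2.le⟩ hu.1
  have hFmono : MonotoneOn (fun t => A t + (1 - t) * derivWithin A (Set.Ici t) t)
      (Set.Ico 0 1) := by
    intro s hs t ht hst
    rcases eq_or_lt_of_le hst with rfl | h
    · exact le_refl _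
    simp only [dval s hs, dval t ht]
    have h1 : d s ≤ slope A s t := dle s hs t ⟨(hs.1.trans h.le), ht.2.le⟩ h
    have h2 : d s ≤ d t := h1.trans ((slope_comm A s t ▸ dge s ⟨hs.1, hs.2.le⟩ t ht h))
    have hts : 0 < t - s := sub_pos.2 h
    have hAst : (t - s) * d s ≤ A t - A s := by
      rw [slope_def_field] at h1
      calc (t - s) * d s ≤ (t - s) * ((A t - A s) / (t - s)) := by
            exact mul_le_mul_of_nonneg_left h1 hts.le
      _ = A t - A s := by field_simp
    have h1t : 0 ≤ 1 - t := by linarith [ht.2]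
    nlinarith [mul_le_mul_of_nonneg_left h2 h1t]
  refine ⟨hFmono, fun t ht => ?_⟩
  have h0 : (0:ℝ) ∈ Set.Ico (0:ℝ) 1 := by norm_num
  have := hFmono h0 ht ht.1
  simp only [dval 0 h0] at this
  have hF0 : (0:ℝ) ≤ A 0 + (1 - 0) * d 0 := by
    rw [hA0]
    have := dlb 0 h0
    linarith
  exact hF0.trans this
end
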